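/- Let K = 2^m with m ≥ 3 (so K ≥ 8). Then there exists a vector a ∈ ℝ^{K−1} with all entries strictly positive such that Σ_{i=1}^{K−1} â_i²·(b_i(a) − b̄(a)) > 0; that is, the time derivative of the metric M(a) = (1/2)·Σ_i (â_i − 1/(K−1))² along the reduced cross-entropy gradient flow da_i/dt = a_i b_i(a)/D(a) is strictly positive at a. Consequently, for K ≥ 8 the metric M is not monotonically decreasing along all trajectories with positive initialization. -/

import Mathlib

/-!
Clearing the normalisation and using the symmetry of `Ψ` turns `(Σ a)³ · Σ_i â_i² (b_i − b̄)` into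
`metricRate Ψ a = Σ_j ((Σ a)(Ψ a²)_j − (Σ a²)(Ψ a)_j) e^{−(Ψ a)_j}`.
Over all `2^m` indices, `Ψ̃ = 1 1ᵀ − Φ` has a zero first row, and the Sylvester recursion reads
`Ψ̃_{2K} = [[Ψ̃, Ψ̃], [Ψ̃, 2·1 1ᵀ − Ψ̃]]`. Splitting a vector as `(a/2, a/2)` halves the rate: each
row of the second block sees `(Ψ a)_j = Σ a` and `(Ψ a²)_j = Σ a² / 2`, so its term cancels; and a
vector vanishing at index `0` has the same rate for `Ψ̃` as its restriction has for the core `Ψ`.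
Hence a nonnegative vector with positive rate for `K = 8`, found by direct computation, propagates
to every `K = 2^m ≥ 8`, and continuity of the rate moves it into the open positive orthant.
-/
open Matrix Finset

noncomputable section

/-- The Sylvester Hadamard matrix `Φ_{2^m}`, defined recursively by `Φ₁ = (1)` and
`Φ_{2^{m+1}} = [[Φ_{2^m}, Φ_{2^m}], [Φ_{2^m}, -Φ_{2^m}]]`. -/
def sylvester : (m : ℕ) → Matrix (Fin (2 ^ m)) (Fin (2 ^ m)) ℝ
  | 0 => Matrix.of fun _ _ => 1
  | m + 1 => Matrix.of fun i j =>
      (if 2 ^ m ≤ i.val ∧ 2 ^ m ≤ j.val then -1 else 1) *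
        sylvester m ⟨i.val % 2 ^ m, Nat.mod_lt _ (Nat.two_pow_pos m)⟩
          ⟨j.val % 2 ^ m, Nat.mod_lt _ (Nat.two_pow_pos m)⟩

/-- The core `X = Φ[2:K, 2:K]` obtained by deleting the first row and column of `Φ`. -/
def hadCore (m : ℕ) : Matrix (Fin (2 ^ m - 1)) (Fin (2 ^ m - 1)) ℝ :=
  Matrix.of fun i j =>
    sylvester m ⟨i.val + 1, by have h1 := Nat.two_pow_pos m; have h2 := i.isLt; omega⟩
      ⟨j.val + 1, by have h1 := Nat.two_pow_pos m; have h2 := j.isLt; omega⟩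

/-- `Ψ = 1 1ᵀ − X`. -/
def PsiM (m : ℕ) : Matrix (Fin (2 ^ m - 1)) (Fin (2 ^ m - 1)) ℝ :=
  Matrix.of fun i j => 1 - hadCore m i j

/-- `b_i(a) = Σ_j Ψ_{ij} exp(−(Ψa)_j)`. -/
def bVec (m : ℕ) (a : Fin (2 ^ m - 1) → ℝ) (i : Fin (2 ^ m - 1)) : ℝ :=
  ∑ j, PsiM m i j * Real.exp (-((PsiM m).mulVec a j))

/-- `D(a) = 1 + Σ_j exp(−(Ψa)_j)`. -/
def Dden (m : ℕ) (a : Fin (2 ^ m - 1) → ℝ) : ℝ :=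
  1 + ∑ j, Real.exp (-((PsiM m).mulVec a j))

/-- The energy `E(a) = log(1 + Σ_j exp(−(Ψa)_j))`. -/
def energyE (m : ℕ) (a : Fin (2 ^ m - 1) → ℝ) : ℝ :=
  Real.log (1 + ∑ j, Real.exp (-((PsiM m).mulVec a j)))

/-- `b̄(a) = Σ_j â_j b_j(a)` with `â = a / ‖a‖₁`. -/
def bbar (m : ℕ) (a : Fin (2 ^ m - 1) → ℝ) : ℝ :=
  ∑ j, (a j / ∑ k, a k) * bVec m a j

/-- `M(a) = (1/2) Σ_i (â_i − 1/(K−1))²`. -/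
def Mmetric (m : ℕ) (a : Fin (2 ^ m - 1) → ℝ) : ℝ :=
  (1 / 2) * ∑ i, (a i / (∑ k, a k) - 1 / ((2 : ℝ) ^ m - 1)) ^ 2

open Real Filter Topology

section MetricRate

variable {ι κ : Type*} [Fintype ι] [Fintype κ]

def metricRate (Ψ : Matrix ι ι ℝ) (a : ι → ℝ) : ℝ :=
  ∑ j, ((∑ k, a k) * (Ψ *ᵥ a ^ 2) j - (∑ k, a k ^ 2) * (Ψ *ᵥ a) j) * exp (-(Ψ *ᵥ a) j)

theorem continuous_metricRate (Ψ : Matrix ι ι ℝ) : Continuous (metricRate Ψ) := by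
  unfold metricRate
  fun_prop

theorem metricRate_submatrix_equiv (Ψ : Matrix ι ι ℝ) (e : κ ≃ ι) (a : ι → ℝ) :
    metricRate (Ψ.submatrix e e) (a ∘ e) = metricRate Ψ a := by
  have hsq : (a ∘ e) ^ 2 = (a ^ 2) ∘ e := rfl
  simp only [metricRate, hsq, Matrix.submatrix_mulVec_equiv, Function.comp_assoc,
    e.self_comp_symm, Function.comp_id, Function.comp_apply]
  rw [e.sum_comp a, e.sum_comp (a · ^ 2)]
  exact e.sum_comp (fun j => ((∑ k, a k) * (Ψ *ᵥ a ^ 2) j - (∑ k, a k ^ 2) * (Ψ *ᵥ a) j) *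
    exp (-(Ψ *ᵥ a) j))

theorem metricRate_option (Ψ : Matrix (Option ι) (Option ι) ℝ) (a : Option ι → ℝ)
    (hΨ : ∀ j, Ψ none j = 0) (ha : a none = 0) :
    metricRate Ψ a = metricRate (Ψ.submatrix some some) (a ∘ some) := by
  have hmulVec : ∀ v : Option ι → ℝ, v none = 0 →
      Ψ.submatrix some some *ᵥ (v ∘ some) = (Ψ *ᵥ v) ∘ some := by
    intro v hv
    ext i
    simp [Matrix.mulVec, dotProduct, Fintype.sum_option, hv]
  have hnone : ∀ v : Option ι → ℝ, (Ψ *ᵥ v) none = 0 := by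
    intro v
    simp [Matrix.mulVec, dotProduct, hΨ]
  have hsq : (a ∘ some) ^ 2 = (a ^ 2) ∘ some := rfl
  rw [metricRate, metricRate, hsq, hmulVec a ha, hmulVec (a ^ 2) (by simp [ha])]
  simp [Fintype.sum_option, hnone, ha]

theorem sum_mul_mulVec_of_transpose_eq {Ψ : Matrix ι ι ℝ} (hΨ : Ψᵀ = Ψ) (v w : ι → ℝ) :
    ∑ i, v i * (Ψ *ᵥ w) i = ∑ j, (Ψ *ᵥ v) j * w j := by
  simpa [dotProduct, ← mulVec_transpose, hΨ] using dotProduct_mulVec v Ψ w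

theorem sum_sq_div_mul_sub_mean {Ψ : Matrix ι ι ℝ} (hΨ : Ψᵀ = Ψ) (a w : ι → ℝ)
    (ha : ∑ k, a k ≠ 0) :
    ∑ i, (a i / ∑ k, a k) ^ 2 * ((Ψ *ᵥ w) i - ∑ j, (a j / ∑ k, a k) * (Ψ *ᵥ w) j) =
      (∑ j, ((∑ k, a k) * (Ψ *ᵥ a ^ 2) j - (∑ k, a k ^ 2) * (Ψ *ᵥ a) j) * w j) /
        (∑ k, a k) ^ 3 := by
  have h2 := sum_mul_mulVec_of_transpose_eq hΨ (a ^ 2) w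
  have h1 := sum_mul_mulVec_of_transpose_eq hΨ a w
  simp only [Pi.pow_apply] at h2
  simp only [sub_mul, mul_assoc, Finset.sum_sub_distrib, ← Finset.mul_sum, ← h1, ← h2, mul_sub,
    ← Finset.sum_mul, div_pow, div_mul_eq_mul_div, ← Finset.sum_div]
  field_simp

def psiDouble (Ψ : Matrix ι ι ℝ) : Matrix (ι ⊕ ι) (ι ⊕ ι) ℝ :=
  Matrix.fromBlocks Ψ Ψ Ψ (Matrix.of fun i j => 2 - Ψ i j)

theorem psiDouble_mulVec_elim (Ψ : Matrix ι ι ℝ) (u : ι → ℝ) :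
    psiDouble Ψ *ᵥ Sum.elim u u = Sum.elim (fun i => 2 * (Ψ *ᵥ u) i) (fun _ => 2 * ∑ i, u i) := by
  rw [psiDouble, Matrix.fromBlocks_mulVec]
  ext (i | i)
  · simp only [Sum.elim_inl, Sum.elim_comp_inl, Sum.elim_comp_inr, Pi.add_apply]
    ring
  · simp only [Sum.elim_inr, Sum.elim_comp_inl, Sum.elim_comp_inr, Pi.add_apply, Matrix.mulVec,
      dotProduct, Matrix.of_apply, ← Finset.sum_add_distrib, Finset.mul_sum]
    exact Finset.sum_congr rfl fun j _ => by ring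

theorem metricRate_psiDouble (Ψ : Matrix ι ι ℝ) (a : ι → ℝ) :
    metricRate (psiDouble Ψ) (Sum.elim (a / 2) (a / 2)) = metricRate Ψ a / 2 := by
  have hsq : Sum.elim (a / 2) (a / 2) ^ 2 = Sum.elim (a ^ 2 / 4) (a ^ 2 / 4) := by
    ext (i | i) <;>
      simp only [Pi.pow_apply, Sum.elim_inl, Sum.elim_inr, Pi.div_apply, Pi.ofNat_apply] <;> ring
  have hr : ∀ j, 2 * (Ψ *ᵥ (a / 2)) j = (Ψ *ᵥ a) j := fun j => by
    simp only [Matrix.mulVec, dotProduct, Finset.mul_sum, Pi.div_apply, Pi.ofNat_apply]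
    exact Finset.sum_congr rfl fun i _ => by ring
  have hq : ∀ j, 2 * (Ψ *ᵥ (a ^ 2 / 4)) j = (Ψ *ᵥ a ^ 2) j / 2 := fun j => by
    simp only [Matrix.mulVec, dotProduct, Finset.mul_sum, Finset.sum_div, Pi.div_apply,
      Pi.pow_apply, Pi.ofNat_apply]
    exact Finset.sum_congr rfl fun i _ => by ring
  rw [metricRate, hsq, psiDouble_mulVec_elim, psiDouble_mulVec_elim, metricRate]
  simp only [Fintype.sum_sum_type, Sum.elim_inl, Sum.elim_inr, hr, hq, Pi.div_apply,
    Pi.pow_apply, Pi.ofNat_apply, div_pow, ← Finset.sum_div, ← Finset.mul_sum]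
  set S := ∑ i, a i
  set N := ∑ i, a i ^ 2
  rw [show (S / 2 + S / 2) * (2 * (N / 4)) - (N / 2 ^ 2 + N / 2 ^ 2) * (2 * (S / 2)) = 0 by ring,
    zero_mul, add_zero, eq_div_iff two_ne_zero, Finset.sum_mul]
  exact Finset.sum_congr rfl fun j _ => by ring

end MetricRate

theorem Continuous.exists_forall_pos_and_pos_of_nonneg {ι : Type*} [Fintype ι]
    {f : (ι → ℝ) → ℝ} (hf : Continuous f) {a : ι → ℝ} (ha : 0 ≤ a) (hfa : 0 < f a) : ∃ b, (∀ i, 0 < b i) ∧ 0 < f b := by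
  have hg : Continuous fun ε : ℝ => f (a + fun _ => ε) := hf.comp (by fun_prop)
  have hev : ∀ᶠ ε in 𝓝[>] (0 : ℝ), 0 < ε ∧ 0 < f (a + fun _ => ε) :=
    eventually_mem_nhdsWithin.and <| nhdsWithin_le_nhds <|
      continuousAt_const.eventually_lt hg.continuousAt (by simpa [← Pi.zero_def] using hfa)
  obtain ⟨ε, hε, hpos⟩ := hev.exists
  exact ⟨a + fun _ => ε, fun i => add_pos_of_nonneg_of_pos (ha i) hε, hpos⟩

theorem sylvester_transpose (m : ℕ) : (sylvester m)ᵀ = sylvester m := by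
  induction m with
  | zero => rfl
  | succ m ih =>
    ext i j
    have h := congrFun (congrFun ih ⟨i % 2 ^ m, Nat.mod_lt _ (Nat.two_pow_pos m)⟩)
      ⟨j % 2 ^ m, Nat.mod_lt _ (Nat.two_pow_pos m)⟩
    simp only [Matrix.transpose_apply] at h ⊢
    simp only [sylvester, Matrix.of_apply, h, and_comm]

theorem sylvester_apply_zero_right (m : ℕ) (i : Fin (2 ^ m)) : sylvester m i 0 = 1 := by
  induction m with
  | zero => rfl
  | succ m ih =>
    have h := ih ⟨i % 2 ^ m, Nat.mod_lt _ (Nat.two_pow_pos m)⟩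
    simp only [sylvester, Matrix.of_apply]
    rw [if_neg (by simp), one_mul, ← h]
    congr 1

theorem sylvester_apply_zero_left (m : ℕ) (j : Fin (2 ^ m)) : sylvester m 0 j = 1 := by
  rw [← sylvester_transpose, Matrix.transpose_apply, sylvester_apply_zero_right]

def sylvesterSplit (m : ℕ) : Fin (2 ^ m) ⊕ Fin (2 ^ m) ≃ Fin (2 ^ (m + 1)) :=
  finSumFinEquiv.trans (finCongr (by ring))

theorem sylvester_succ_submatrix (m : ℕ) :
    (sylvester (m + 1)).submatrix (sylvesterSplit m) (sylvesterSplit m) =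
      Matrix.fromBlocks (sylvester m) (sylvester m) (sylvester m) (-sylvester m) := by
  ext (i | i) (j | j) <;>
    simp [sylvesterSplit, sylvester, Nat.mod_eq_of_lt]

def sylvesterPsi (m : ℕ) : Matrix (Fin (2 ^ m)) (Fin (2 ^ m)) ℝ :=
  Matrix.of fun i j => 1 - sylvester m i j

theorem sylvesterPsi_succ_submatrix (m : ℕ) :
    (sylvesterPsi (m + 1)).submatrix (sylvesterSplit m) (sylvesterSplit m) =
      psiDouble (sylvesterPsi m) := by
  ext i j
  have h := congrFun (congrFun (sylvester_succ_submatrix m) i) j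
  simp only [Matrix.submatrix_apply] at h
  simp only [Matrix.submatrix_apply, sylvesterPsi, Matrix.of_apply, h]
  rcases i with i | i <;> rcases j with j | j
  all_goals simp only [psiDouble, Matrix.fromBlocks_apply₁₁, Matrix.fromBlocks_apply₁₂,
    Matrix.fromBlocks_apply₂₁, Matrix.fromBlocks_apply₂₂, Matrix.neg_apply, Matrix.of_apply]
  ring

def sylvesterCoreEquiv (m : ℕ) : Option (Fin (2 ^ m - 1)) ≃ Fin (2 ^ m) :=
  (finSuccEquiv _).symm.trans (finCongr (Nat.sub_add_cancel Nat.one_le_two_pow))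

theorem sylvesterCoreEquiv_none (m : ℕ) : sylvesterCoreEquiv m none = 0 := rfl

theorem sylvesterPsi_submatrix_core (m : ℕ) :
    ((sylvesterPsi m).submatrix (sylvesterCoreEquiv m) (sylvesterCoreEquiv m)).submatrix
      some some = PsiM m := rfl

theorem metricRate_PsiM_eq (m : ℕ) (x : Fin (2 ^ m) → ℝ) (hx : x 0 = 0) :
    metricRate (PsiM m) (x ∘ sylvesterCoreEquiv m ∘ some) = metricRate (sylvesterPsi m) x := by
  rw [← sylvesterPsi_submatrix_core, ← Function.comp_assoc, ← metricRate_option,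
    metricRate_submatrix_equiv]
  · intro j
    simp [sylvesterCoreEquiv_none, sylvesterPsi, sylvester_apply_zero_left]
  · simpa [sylvesterCoreEquiv_none] using hx

theorem PsiM_transpose (m : ℕ) : (PsiM m)ᵀ = PsiM m := by
  ext i j
  simp only [Matrix.transpose_apply, PsiM, hadCore, Matrix.of_apply]
  rw [← Matrix.transpose_apply (sylvester m), sylvester_transpose]

def baseWitness : Fin (2 ^ 3) → ℝ := ![0, 0, 0, 1, 1, 6 / 5, 0, 1]

theorem metricRate_baseWitness :
    metricRate (sylvesterPsi 3) baseWitness =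
      36 / 25 * (exp (-(12 / 5)) + exp (-(32 / 5)) - 2 * exp (-4)) := by
  have hr : sylvesterPsi 3 *ᵥ baseWitness = ![0, 32 / 5, 4, 12 / 5, 32 / 5, 4, 32 / 5, 4] := by
    ext i
    fin_cases i <;> simp [sylvesterPsi, sylvester, baseWitness, Matrix.mulVec, dotProduct,
      Fin.sum_univ_eight] <;> norm_num
  have hq : sylvesterPsi 3 *ᵥ baseWitness ^ 2 =
      ![0, 172 / 25, 4, 72 / 25, 172 / 25, 4, 172 / 25, 4] := by
    ext i
    fin_cases i <;> simp [sylvesterPsi, sylvester, baseWitness, Matrix.mulVec, dotProduct,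
      Fin.sum_univ_eight] <;> norm_num
  rw [metricRate, hr, hq]
  simp only [Nat.reducePow, baseWitness, Fin.sum_univ_succ, Fin.isValue, cons_val_zero,
    cons_val_succ, univ_unique, Fin.default_eq_zero, cons_val_fin_one, sum_const, card_singleton,
    one_smul, zero_add, Nat.succ_eq_add_one, Nat.reduceAdd, ne_eq, OfNat.ofNat_ne_zero,
    not_false_eq_true, zero_pow, one_pow, mul_zero, sub_self, neg_zero, exp_zero, mul_one]
  ring

theorem metricRate_baseWitness_pos : 0 < metricRate (sylvesterPsi 3) baseWitness := by
  have hexp : 2 * exp (-4) < exp (-(12 / 5)) := by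
    rw [show -(12 / 5 : ℝ) = 8 / 5 + -4 by norm_num, exp_add]
    have := add_one_lt_exp (x := (8 / 5 : ℝ)) (by norm_num)
    nlinarith [exp_pos (-4)]
  rw [metricRate_baseWitness]
  linarith [exp_pos (-(32 / 5))]

theorem exists_nonneg_metricRate_sylvesterPsi_pos (m : ℕ) (hm : 3 ≤ m) :
    ∃ x : Fin (2 ^ m) → ℝ, x 0 = 0 ∧ 0 ≤ x ∧ 0 < metricRate (sylvesterPsi m) x := by
  induction m, hm using Nat.le_induction with
  | base =>
    exact ⟨baseWitness, rfl, fun i => by fin_cases i <;> norm_num [baseWitness],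
      metricRate_baseWitness_pos⟩
  | succ m _ ih =>
    obtain ⟨x, hx0, hx, hpos⟩ := ih
    refine ⟨Sum.elim (x / 2) (x / 2) ∘ (sylvesterSplit m).symm, ?_, ?_, ?_⟩
    · have : (sylvesterSplit m).symm 0 = Sum.inl 0 := (sylvesterSplit m).symm_apply_eq.2 rfl
      simp [this, hx0]
    · intro i
      rcases h : (sylvesterSplit m).symm i with j | j <;>
        simpa [h] using div_nonneg (hx j) zero_le_two
    · rw [← metricRate_submatrix_equiv _ (sylvesterSplit m), sylvesterPsi_succ_submatrix,
        Function.comp_assoc, Equiv.symm_comp_self, Function.comp_id, metricRate_psiDouble]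
      positivity

theorem sum_sq_mul_bVec_sub_bbar (m : ℕ) (a : Fin (2 ^ m - 1) → ℝ) (ha : ∑ k, a k ≠ 0) :
    ∑ i, (a i / ∑ k, a k) ^ 2 * (bVec m a i - bbar m a) =
      metricRate (PsiM m) a / (∑ k, a k) ^ 3 :=
  sum_sq_div_mul_sub_mean (PsiM_transpose m) a (fun j => exp (-(PsiM m *ᵥ a) j)) ha

/-- non-monotonicity of the L2 metric for `K ≥ 8`.
For `K = 2^m` with `m ≥ 3`, there exists `a ∈ ℝ^{K−1}` with strictly positive entries such
that `Σ_i â_i²(b_i(a) − b̄(a)) > 0`, i.e. the time derivative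
`dM/dt = (1/D(a))·Σ_i â_i²(b_i(a) − b̄(a))` of the metric `M` along the reduced
cross-entropy gradient flow is strictly positive at `a`; hence for `K ≥ 8` the metric `M`
is not monotonically decreasing along all trajectories with positive initialization. -/
theorem metric_not_monotone_K_ge_8 (m : ℕ) (hm : 3 ≤ m) :
    ∃ a : Fin (2 ^ m - 1) → ℝ, (∀ i, 0 < a i) ∧
      0 < ∑ i, (a i / ∑ k, a k) ^ 2 * (bVec m a i - bbar m a) ∧
      0 < (1 / Dden m a) * ∑ i, (a i / ∑ k, a k) ^ 2 * (bVec m a i - bbar m a) := by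
  obtain ⟨x, hx0, hx, hpos⟩ := exists_nonneg_metricRate_sylvesterPsi_pos m hm
  rw [← metricRate_PsiM_eq m x hx0] at hpos
  obtain ⟨a, ha, hrate⟩ :=
    (continuous_metricRate (PsiM m)).exists_forall_pos_and_pos_of_nonneg (fun i => hx _) hpos
  have hS : 0 < ∑ k, a k :=
    Finset.sum_pos (fun i _ => ha i) (Finset.nonempty_of_sum_ne_zero hrate.ne')
  have hF : 0 < ∑ i, (a i / ∑ k, a k) ^ 2 * (bVec m a i - bbar m a) := by
    rw [sum_sq_mul_bVec_sub_bbar m a hS.ne']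
    exact div_pos hrate (pow_pos hS 3)
  exact ⟨a, ha, hF, mul_pos (one_div_pos.2 (by unfold Dden; positivity)) hF⟩
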